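/- The planar relativistic collision map R̂ satisfies the collision invariant conditions: for all real α, β with q = α − β and all x, y ∈ ℝ³ with ⟨x+y, x+y⟩ + q² ≠ 0, setting (u, v) = R̂_{α,β}(x, y), one has u + v = x + y, ⟨u,u⟩ = ⟨x,x⟩, and ⟨v,v⟩ = ⟨y,y⟩ (conservation of relativistic energy, momentum, and the rest masses of the two particles). Moreover, if x and y are forward timelike (positive 0-th component and positive Minkowski square), then so are u and v. -/

import Mathlib

/-- The three-dimensional Minkowski bilinear form on `ℝ³`. -/
def mink3 (a b : ℝ × ℝ × ℝ) : ℝ :=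
  a.1 * b.1 - a.2.1 * b.2.1 - a.2.2 * b.2.2

/-- A vector of `ℝ³` is forward timelike if its 0-th component and its
Minkowski square are positive. -/
def ForwardTimelike3 (a : ℝ × ℝ × ℝ) : Prop := 0 < a.1 ∧ 0 < mink3 a a

/-- The coefficient `k̂(x,y,q)` of the planar relativistic collision map. -/
noncomputable def khat (x y : ℝ × ℝ × ℝ) (q : ℝ) : ℝ :=
  (mink3 x x - mink3 y y + q ^ 2) / (mink3 (x + y) (x + y) + q ^ 2)

/-- The vector `r̂(x,y,q)` of the planar relativistic collision map. -/
noncomputable def rhat (x y : ℝ × ℝ × ℝ) (q : ℝ) : ℝ × ℝ × ℝ :=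
  (mink3 (x + y) (x + y) + q ^ 2)⁻¹ •
    ((x.2.1 * y.2.2 - x.2.2 * y.2.1,
      x.1 * y.2.2 - x.2.2 * y.1,
      x.2.1 * y.1 - x.1 * y.2.1) : ℝ × ℝ × ℝ)

/-- The planar relativistic collision map `R̂_{α,β}`. -/
noncomputable def Rhat (α β : ℝ) (x y : ℝ × ℝ × ℝ) :
    (ℝ × ℝ × ℝ) × (ℝ × ℝ × ℝ) :=
  (khat x y (α - β) • x + (1 - khat y x (α - β)) • y +
      (2 * (α - β)) • rhat x y (α - β),
   (1 - khat x y (α - β)) • x + khat y x (α - β) • y -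
      (2 * (α - β)) • rhat x y (α - β))

/-!
The map is built so that `u + v = x + y` identically. Writing `w` for the Minkowski cross product
of `x` and `y`, which is orthogonal to both and has square `⟨x,x⟩⟨y,y⟩ - ⟨x,y⟩²`, the square
`⟨u,u⟩` becomes a rational function of `⟨x,x⟩, ⟨x,y⟩, ⟨y,y⟩, q` that reduces to `⟨x,x⟩`; and
`v` is the first output of the map applied to `(y, x)`. Conservation of both squares and of
the sum forces `⟨u,v⟩ = ⟨x,y⟩`, which is positive for forward timelike `x, y` by the reverse
Cauchy–Schwarz inequality; timelike vectors with positive product lie in the same time cone, and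
`u₀ + v₀ = x₀ + y₀ > 0` selects the forward one.
-/

lemma mink3_add_self (a b : ℝ × ℝ × ℝ) :
    mink3 (a + b) (a + b) = mink3 a a + 2 * mink3 a b + mink3 b b := by
  unfold mink3; simp only [Prod.fst_add, Prod.snd_add]; ring

lemma sq_spatial_lt_sq_time {a b : ℝ × ℝ × ℝ} (ha : 0 < mink3 a a) (hb : 0 < mink3 b b) :
    (a.2.1 * b.2.1 + a.2.2 * b.2.2) ^ 2 < (a.1 * b.1) ^ 2 := by
  unfold mink3 at ha hb
  calc (a.2.1 * b.2.1 + a.2.2 * b.2.2) ^ 2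
      ≤ (a.2.1 ^ 2 + a.2.2 ^ 2) * (b.2.1 ^ 2 + b.2.2 ^ 2) := by
        nlinarith [sq_nonneg (a.2.1 * b.2.2 - a.2.2 * b.2.1)]
    _ < a.1 ^ 2 * b.1 ^ 2 :=
        mul_lt_mul'' (by nlinarith) (by nlinarith) (by positivity) (by positivity)
    _ = (a.1 * b.1) ^ 2 := by ring

lemma ForwardTimelike3.mink3_pos {a b : ℝ × ℝ × ℝ} (ha : ForwardTimelike3 a)
    (hb : ForwardTimelike3 b) : 0 < mink3 a b := by
  have h := sq_lt_sq.mp (sq_spatial_lt_sq_time ha.2 hb.2)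
  rw [abs_of_pos (mul_pos ha.1 hb.1)] at h
  unfold mink3
  linarith [le_abs_self (a.2.1 * b.2.1 + a.2.2 * b.2.2)]

lemma mul_time_pos_of_mink3_pos {a b : ℝ × ℝ × ℝ} (ha : 0 < mink3 a a) (hb : 0 < mink3 b b)
    (hab : 0 < mink3 a b) : 0 < a.1 * b.1 := by
  have h := sq_spatial_lt_sq_time ha hb
  unfold mink3 at hab
  by_contra! hle
  nlinarith

lemma forwardTimelike3_of_mink3_pos {a b : ℝ × ℝ × ℝ} (ha : 0 < mink3 a a)
    (hb : 0 < mink3 b b) (hab : 0 < mink3 a b) (hsum : 0 < a.1 + b.1) :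
    ForwardTimelike3 a ∧ ForwardTimelike3 b := by
  rcases pos_and_pos_or_neg_and_neg_of_mul_pos (mul_time_pos_of_mink3_pos ha hb hab) with
    ⟨ha₀, hb₀⟩ | ⟨ha₀, hb₀⟩
  · exact ⟨⟨ha₀, ha⟩, ⟨hb₀, hb⟩⟩
  · linarith

def minkCross (a b : ℝ × ℝ × ℝ) : ℝ × ℝ × ℝ :=
  (a.2.1 * b.2.2 - a.2.2 * b.2.1, a.1 * b.2.2 - a.2.2 * b.1, a.2.1 * b.1 - a.1 * b.2.1)

lemma mink3_smul_add_smul_add_smul_minkCross (a b : ℝ × ℝ × ℝ) (s t r : ℝ) :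
    mink3 (s • a + t • b + r • minkCross a b) (s • a + t • b + r • minkCross a b) =
      s ^ 2 * mink3 a a + 2 * s * t * mink3 a b + t ^ 2 * mink3 b b +
        r ^ 2 * (mink3 a a * mink3 b b - mink3 a b ^ 2) := by
  obtain ⟨a₀, a₁, a₂⟩ := a
  obtain ⟨b₀, b₁, b₂⟩ := b
  simp only [mink3, minkCross, Prod.smul_mk, Prod.mk_add_mk, smul_eq_mul]
  ring

lemma rhat_eq (a b : ℝ × ℝ × ℝ) (q : ℝ) :
    rhat a b q = (mink3 (a + b) (a + b) + q ^ 2)⁻¹ • minkCross a b := rfl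

lemma rhat_swap (a b : ℝ × ℝ × ℝ) (q : ℝ) : rhat b a q = -rhat a b q := by
  rw [rhat_eq, rhat_eq, add_comm b a, ← smul_neg]
  congr 1
  simp only [minkCross, Prod.neg_mk]
  ext <;> simp only <;> ring

lemma Rhat_fst_add_snd (α β : ℝ) (a b : ℝ × ℝ × ℝ) :
    (Rhat α β a b).1 + (Rhat α β a b).2 = a + b := by
  simp only [Rhat]
  module

lemma Rhat_snd (α β : ℝ) (a b : ℝ × ℝ × ℝ) : (Rhat α β a b).2 = (Rhat α β b a).1 := by
  simp only [Rhat, rhat_swap b a, smul_neg]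
  abel

lemma mink3_Rhat_fst (α β : ℝ) (a b : ℝ × ℝ × ℝ)
    (h : mink3 (a + b) (a + b) + (α - β) ^ 2 ≠ 0) :
    mink3 (Rhat α β a b).1 (Rhat α β a b).1 = mink3 a a := by
  have hfst : (Rhat α β a b).1 = khat a b (α - β) • a + (1 - khat b a (α - β)) • b +
      (2 * (α - β) * (mink3 (a + b) (a + b) + (α - β) ^ 2)⁻¹) • minkCross a b := by
    rw [Rhat, rhat_eq, smul_smul]
  rw [mink3_add_self] at h
  rw [hfst, mink3_smul_add_smul_add_smul_minkCross, khat, khat, add_comm b a, mink3_add_self]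
  field_simp
  ring

/-- The planar relativistic collision map satisfies the collision invariant
conditions and preserves forward timelike vectors. -/
theorem planar_collision_invariants
    (α β : ℝ) (x y : ℝ × ℝ × ℝ)
    (h : mink3 (x + y) (x + y) + (α - β) ^ 2 ≠ 0)
    (u v : ℝ × ℝ × ℝ) (huv : (u, v) = Rhat α β x y) :
    u + v = x + y ∧
    mink3 u u = mink3 x x ∧
    mink3 v v = mink3 y y ∧
    (ForwardTimelike3 x → ForwardTimelike3 y →
      ForwardTimelike3 u ∧ ForwardTimelike3 v) := by
  obtain ⟨rfl, rfl⟩ := Prod.ext_iff.mp huv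
  have hsum := Rhat_fst_add_snd α β x y
  have hu := mink3_Rhat_fst α β x y h
  have hv : mink3 (Rhat α β x y).2 (Rhat α β x y).2 = mink3 y y := by
    rw [Rhat_snd]
    exact mink3_Rhat_fst α β y x (by rwa [add_comm y x])
  refine ⟨hsum, hu, hv, fun hx hy => ?_⟩
  have hdot : mink3 (Rhat α β x y).1 (Rhat α β x y).2 = mink3 x y := by
    have := congrArg (fun a => mink3 a a) hsum
    simp only [mink3_add_self, hu, hv] at this
    linarith
  refine forwardTimelike3_of_mink3_pos (hu ▸ hx.2) (hv ▸ hy.2) (hdot ▸ hx.mink3_pos hy) ?_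
  rw [← Prod.fst_add, hsum, Prod.fst_add]
  exact add_pos hx.1 hy.1
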